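/- arXiv:1907.04645 — 3 statements merged into one kernel-verified Lean document; each statement's English description precedes it below -/
import Mathlib

section
/- If three points a, b, c in R^2 are collinear and b lies on the segment between a and c, then for any points a', c' in R^2, the distance from b to the line through a' and c' is at most the maximum of dist(a,a') and dist(c,c'). -/
open MeasureTheory Metric Real

noncomputable section

abbrev Pt := EuclideanSpace ℝ (Fin 2)

/-- Twice the signed area of the triangle `a b c`; its sign is the orientation. -/
def det3 (a b c : Pt) : ℝ :=
  (b 0 - a 0) * (c 1 - a 1) - (b 1 - a 1) * (c 0 - a 0)

/-- Orientation sign of an ordered triple of planar points. -/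
def ori (a b c : Pt) : ℝ := Real.sign (det3 a b c)

/-- The line through two points (as a subset of the plane). -/
def lineThrough (a b : Pt) : Set Pt := (affineSpan ℝ {a, b} : Set Pt)

/-- Distance from `x` to the line through `a` and `b`. -/
def distLine (x a b : Pt) : ℝ := Metric.infDist x (lineThrough a b)

/-- A triple is `w`-flat if some point is within distance `√2·w` of the
line through the other two. -/
def WFlat (w : ℝ) (p q r : Pt) : Prop :=
  distLine p q r ≤ Real.sqrt 2 * w ∨ distLine q p r ≤ Real.sqrt 2 * w ∨
    distLine r p q ≤ Real.sqrt 2 * w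

/-- The uniform probability measure on the closed disk of radius `δ` centered at `c`. -/
def unifDisk (c : Pt) (δ : ℝ) : Measure Pt :=
  (volume (Metric.closedBall c δ))⁻¹ • volume.restrict (Metric.closedBall c δ)

/-- Snapping a point to the nearest point of the grid `w·ℤ²`. -/
def snap (w : ℝ) (p : Pt) : Pt := WithLp.toLp 2 (fun i => w * (round (p i / w) : ℝ))

/-! Write `b = lineMap a c t` with `t ∈ [0, 1]`. The point `lineMap a' c' t` lies on the line
through `a'` and `c'`, and its displacement from `b` is the convex combination
`lineMap (a -ᵥ a') (c -ᵥ c') t`, which stays in the ball of radius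
`max (dist a a') (dist c c')` by convexity. -/

open Set AffineMap in
theorem dist_lineMap_lineMap_le_max {V P : Type*} [SeminormedAddCommGroup V] [NormedSpace ℝ V]
    [PseudoMetricSpace P] [NormedAddTorsor V P] (p₁ p₂ q₁ q₂ : P) {t : ℝ}
    (ht : t ∈ Icc (0 : ℝ) 1) :
    dist (lineMap p₁ p₂ t) (lineMap q₁ q₂ t) ≤ max (dist p₁ q₁) (dist p₂ q₂) := by
  rw [dist_eq_norm_vsub V, lineMap_vsub_lineMap, ← mem_closedBall_zero_iff]
  refine (convex_closedBall _ _).lineMap_mem ?_ ?_ ht <;>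
    rw [mem_closedBall_zero_iff, ← dist_eq_norm_vsub]
  exacts [le_max_left _ _, le_max_right _ _]

theorem stmt1_general (a b c a' c' : Pt) (hb : b ∈ segment ℝ a c) :
    distLine b a' c' ≤ max (dist a a') (dist c c') := by
  rw [segment_eq_image_lineMap] at hb
  obtain ⟨t, ht, rfl⟩ := hb
  calc distLine (AffineMap.lineMap a c t) a' c'
      ≤ dist (AffineMap.lineMap a c t) (AffineMap.lineMap a' c' t) :=
        infDist_le_dist_of_mem (AffineMap.lineMap_mem_affineSpan_pair t a' c')
    _ ≤ max (dist a a') (dist c c') := dist_lineMap_lineMap_le_max a c a' c' ht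

theorem stmt1 (a b c a' c' : Pt) (hb : b ∈ segment ℝ a c) (hne : a' ≠ c') :
    distLine b a' c' ≤ max (dist a a') (dist c c') :=
  stmt1_general a b c a' c' hb
end
end

section
/- Let w > 0 and let p, q, r in R^2 be a triple of points such that each of the three points has distance greater than √2·w from the line through the other two (in particular no two of them coincide). Let p', q', r' be points with dist(p,p') ≤ w/√2, dist(q,q') ≤ w/√2, dist(r,r') ≤ w/√2. Then the orientation of (p', q', r') equals the orientation of (p, q, r). -/
open MeasureTheory Metric Real

noncomputable section

/-! Move `p, q, r` to `p', q', r'` along straight segments. At every time each moving point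
stays within `δ = w / √2` of its start, so if the three moving points were ever collinear, the
middle one would lie in the (convex) `δ`-neighbourhood of the line through the original outer two,
putting the original middle point within `2δ = √2 w` of that line. Hence `det3` never vanishes
along the motion and its sign is constant by the intermediate value theorem. -/

lemma collinear_of_det3_eq_zero {a b c : Pt} (h : det3 a b c = 0) :
    Collinear ℝ ({a, b, c} : Set Pt) := by
  obtain ⟨v, hv, hker⟩ := Matrix.exists_mulVec_eq_zero_iff.mpr
    (show (!![b 0 - a 0, c 0 - a 0; b 1 - a 1, c 1 - a 1]).det = 0 by
      rw [Matrix.det_fin_two_of, ← h, det3]; ring)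
  have hcomb : v 0 • (b - a) + v 1 • (c - a) = 0 := by
    ext i
    fin_cases i
    · simpa [Matrix.mulVec, dotProduct, Fin.sum_univ_two, mul_comm] using congrFun hker 0
    · simpa [Matrix.mulVec, dotProduct, Fin.sum_univ_two, mul_comm] using congrFun hker 1
  rw [collinear_iff_not_affineIndependent_set]
  intro hind
  have hzero := hind.eq_zero_of_sum_eq_zero (s := Finset.univ) (w := ![-(v 0 + v 1), v 0, v 1])
    (by simp [Fin.sum_univ_three]) (by rw [← hcomb]; simp [Fin.sum_univ_three]; module)
  have h0 : v 0 = 0 := by simpa using hzero 1 (Finset.mem_univ _)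
  have h1 : v 1 = 0 := by simpa using hzero 2 (Finset.mem_univ _)
  exact hv (funext fun i => by fin_cases i <;> assumption)

lemma distLine_le_of_wbtw {δ : ℝ} {x y z x' y' z' : Pt}
    (hx : dist x x' ≤ δ) (hy : dist y y' ≤ δ) (hz : dist z z' ≤ δ) (h : Wbtw ℝ x' y' z') :
    distLine y x z ≤ 2 * δ := by
  have hx' : x' ∈ cthickening δ (lineThrough x z) :=
    mem_cthickening_of_dist_le x' x δ _ (subset_affineSpan ℝ _ (by simp)) (dist_comm x x' ▸ hx)
  have hz' : z' ∈ cthickening δ (lineThrough x z) :=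
    mem_cthickening_of_dist_le z' z δ _ (subset_affineSpan ℝ _ (by simp)) (dist_comm z z' ▸ hz)
  have hy' : y' ∈ cthickening δ (lineThrough x z) :=
    ((affineSpan ℝ {x, z}).convex.cthickening δ).segment_subset hx' hz' (mem_segment_iff_wbtw.2 h)
  calc distLine y x z ≤ infDist y' (lineThrough x z) + dist y y' := infDist_le_infDist_add_dist
    _ ≤ δ + δ := add_le_add (ENNReal.toReal_le_of_le_ofReal (dist_nonneg.trans hy) hy') hy
    _ = 2 * δ := by ring

lemma det3_ne_zero_of_dist_le {δ : ℝ} {p q r p' q' r' : Pt}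
    (hp : 2 * δ < distLine p q r) (hq : 2 * δ < distLine q p r) (hr : 2 * δ < distLine r p q)
    (hp' : dist p p' ≤ δ) (hq' : dist q q' ≤ δ) (hr' : dist r r' ≤ δ) :
    det3 p' q' r' ≠ 0 := by
  intro h
  rcases (collinear_of_det3_eq_zero h).wbtw_or_wbtw_or_wbtw with hb | hb | hb
  · exact (distLine_le_of_wbtw hp' hq' hr' hb).not_gt hq
  · exact (distLine_le_of_wbtw hp' hr' hq' hb.symm).not_gt hr
  · exact (distLine_le_of_wbtw hq' hp' hr' hb.symm).not_gt hp

lemma IsPreconnected.sign_eq_of_forall_ne_zero {X : Type*} [TopologicalSpace X] {s : Set X}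
    {f : X → ℝ} (hs : IsPreconnected s) (hf : ContinuousOn f s) (h0 : ∀ x ∈ s, f x ≠ 0) {a b : X}
    (ha : a ∈ s) (hb : b ∈ s) : Real.sign (f a) = Real.sign (f b) := by
  rcases (h0 a ha).lt_or_gt with hfa | hfa <;> rcases (h0 b hb).lt_or_gt with hfb | hfb
  · rw [Real.sign_of_neg hfa, Real.sign_of_neg hfb]
  · obtain ⟨x, hx, hfx⟩ := hs.intermediate_value ha hb hf ⟨hfa.le, hfb.le⟩
    exact absurd hfx (h0 x hx)
  · obtain ⟨x, hx, hfx⟩ := hs.intermediate_value hb ha hf ⟨hfb.le, hfa.le⟩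
    exact absurd hfx (h0 x hx)
  · rw [Real.sign_of_pos hfa, Real.sign_of_pos hfb]

lemma Continuous.det3 {X : Type*} [TopologicalSpace X] {a b c : X → Pt}
    (ha : Continuous a) (hb : Continuous b) (hc : Continuous c) :
    Continuous fun x => det3 (a x) (b x) (c x) := by
  unfold _root_.det3; fun_prop

lemma dist_lineMap_le {E : Type*} [NormedAddCommGroup E] [NormedSpace ℝ E] {x y : E} {t : ℝ}
    (ht : t ∈ Set.Icc (0 : ℝ) 1) : dist x (AffineMap.lineMap x y t) ≤ dist x y := by
  have hbtw : Wbtw ℝ x (AffineMap.lineMap x y t) y := wbtw_lineMap_iff.2 (Or.inr ht)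
  linarith [hbtw.dist_add_dist, dist_nonneg (x := AffineMap.lineMap x y t) (y := y)]

theorem stmt2_general (w : ℝ) (p q r p' q' r' : Pt)
    (hp : Real.sqrt 2 * w < distLine p q r)
    (hq : Real.sqrt 2 * w < distLine q p r)
    (hr : Real.sqrt 2 * w < distLine r p q)
    (hp' : dist p p' ≤ w / Real.sqrt 2)
    (hq' : dist q q' ≤ w / Real.sqrt 2)
    (hr' : dist r r' ≤ w / Real.sqrt 2) :
    ori p' q' r' = ori p q r := by
  have h2δ : 2 * (w / Real.sqrt 2) = Real.sqrt 2 * w := by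
    field_simp; rw [Real.sq_sqrt zero_le_two]; ring
  rw [← h2δ] at hp hq hr
  let area (t : ℝ) := det3 (AffineMap.lineMap p p' t) (AffineMap.lineMap q q' t)
    (AffineMap.lineMap r r' t)
  have harea : ∀ t ∈ Set.Icc (0 : ℝ) 1, area t ≠ 0 := fun t ht =>
    det3_ne_zero_of_dist_le hp hq hr ((dist_lineMap_le ht).trans hp')
      ((dist_lineMap_le ht).trans hq') ((dist_lineMap_le ht).trans hr')
  have := isPreconnected_Icc.sign_eq_of_forall_ne_zero
    (Continuous.det3 (by fun_prop) (by fun_prop) (by fun_prop)).continuousOn harea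
    (Set.right_mem_Icc.2 zero_le_one) (Set.left_mem_Icc.2 zero_le_one)
  simpa [area, ori] using this

theorem stmt2 (w : ℝ) (hw : 0 < w) (p q r p' q' r' : Pt)
    (hp : Real.sqrt 2 * w < distLine p q r)
    (hq : Real.sqrt 2 * w < distLine q p r)
    (hr : Real.sqrt 2 * w < distLine r p q)
    (hp' : dist p p' ≤ w / Real.sqrt 2)
    (hq' : dist q q' ≤ w / Real.sqrt 2)
    (hr' : dist r r' ≤ w / Real.sqrt 2) :
    ori p' q' r' = ori p q r :=
  stmt2_general w p q r p' q' r' hp hq hr hp' hq' hr'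
end
end

section
/- Let p, q, r be three independent random points, each distributed uniformly on (possibly different) disks of radius δ > 0 in R^2, and let w > 0. Then the probability that the triple (p,q,r) is w-flat is at most 6·(2√2 w)/(π δ) ≤ 6·(2w)/δ, i.e., at most 12√2 w/(π δ). -/
open MeasureTheory Metric Real

noncomputable section

/-! A point within `s = √2·w` of the line through two others lies in the strip of half-width `s`
about that line, and this strip meets a disk of radius `δ` in area at most `2s · 2δ`. So,
whatever the other two points are, the conditional probability of this event is at most
`4s/(πδ)`; integrating over the other two points (Fubini) and taking a union bound over which of
the three points is the close one gives `12s/(πδ)`. -/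

open scoped RealInnerProductSpace ENNReal
open ProbabilityTheory

lemma lineThrough_eq_range (a b : Pt) :
    lineThrough a b = Set.range (AffineMap.lineMap a b : ℝ → Pt) := by
  ext y
  exact mem_affineSpan_pair_iff_exists_lineMap_eq

lemma distLine_eq_iInf (x a b : Pt) :
    distLine x a b = ⨅ t : ℝ, dist x (AffineMap.lineMap a b t) := by
  refine le_antisymm (le_ciInf fun t => ?_) ?_
  · exact infDist_le_dist_of_mem (AffineMap.lineMap_mem_affineSpan_pair t a b)
  · rw [distLine, lineThrough_eq_range, le_infDist (Set.range_nonempty _)]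
    rintro _ ⟨t, rfl⟩
    exact ciInf_le ⟨0, by rintro _ ⟨u, rfl⟩; exact dist_nonneg⟩ t

/- `distLine` jumps where the two points defining the line collide, but as an infimum of
continuous functions it is upper semicontinuous, which is enough for measurability. -/
lemma upperSemicontinuous_distLine :
    UpperSemicontinuous fun p : Pt × Pt × Pt => distLine p.1 p.2.1 p.2.2 := by
  simp_rw [distLine_eq_iInf]
  refine upperSemicontinuous_ciInf (fun p => ⟨0, by rintro _ ⟨u, rfl⟩; exact dist_nonneg⟩)
    fun t => Continuous.upperSemicontinuous ?_
  simp_rw [AffineMap.lineMap_apply_module]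
  fun_prop

lemma Measurable.distLine {α : Type*} [MeasurableSpace α] {u v w : α → Pt}
    (hu : Measurable u) (hv : Measurable v) (hw : Measurable w) :
    Measurable fun x => _root_.distLine (u x) (v x) (w x) :=
  upperSemicontinuous_distLine.measurable.comp (f := fun x => (u x, v x, w x))
    (hu.prodMk (hv.prodMk hw))

lemma abs_inner_sub_le_distLine {a b x n : Pt} (hn : ‖n‖ = 1) (hab : ⟪b - a, n⟫ = 0) :
    |⟪x - a, n⟫| ≤ distLine x a b := by
  rw [distLine, lineThrough_eq_range, le_infDist (Set.range_nonempty _)]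
  rintro _ ⟨t, rfl⟩
  have hline : ⟪AffineMap.lineMap a b t - a, n⟫ = 0 := by
    rw [← vsub_eq_sub, AffineMap.lineMap_vsub_left, vsub_eq_sub, inner_smul_left, hab, mul_zero]
  calc |⟪x - a, n⟫| = |⟪x - AffineMap.lineMap a b t, n⟫| := by
        rw [← sub_add_sub_cancel x (AffineMap.lineMap a b t) a, inner_add_left, hline, add_zero]
    _ ≤ ‖x - AffineMap.lineMap a b t‖ * ‖n‖ := abs_real_inner_le_norm _ _
    _ = dist x (AffineMap.lineMap a b t) := by rw [hn, mul_one, dist_eq_norm]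

lemma exists_norm_eq_one_inner_eq_zero {E : Type*} [NormedAddCommGroup E] [InnerProductSpace ℝ E]
    [FiniteDimensional ℝ E] (hE : 2 ≤ Module.finrank ℝ E) (v : E) :
    ∃ n : E, ‖n‖ = 1 ∧ ⟪v, n⟫ = 0 := by
  have hK : (ℝ ∙ v)ᗮ ≠ ⊥ := by
    intro h
    have hsum := Submodule.finrank_add_finrank_orthogonal (ℝ ∙ v)
    rw [h, finrank_bot, add_zero] at hsum
    have hv : Module.finrank ℝ (ℝ ∙ v) ≤ 1 := by
      simpa using finrank_span_le_card (R := ℝ) ({v} : Set E)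
    omega
  obtain ⟨u, hu, hu0⟩ := Submodule.exists_mem_ne_zero_of_ne_bot hK
  refine ⟨‖u‖⁻¹ • u, norm_smul_inv_norm hu0, ?_⟩
  rw [inner_smul_right, Submodule.mem_orthogonal_singleton_iff_inner_right.mp hu, mul_zero]

/- The reflection exchanging `n` and the first basis vector maps the strip to a vertical slab
and the disk into a `2s × 2δ` box. -/
lemma volume_strip_inter_closedBall_le {n : Pt} (hn : ‖n‖ = 1) (t s : ℝ) (c : Pt) (δ : ℝ) :
    volume ({x | |⟪x, n⟫ - t| ≤ s} ∩ closedBall c δ) ≤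
      ENNReal.ofReal (2 * s) * ENNReal.ofReal (2 * δ) := by
  set e : Pt := EuclideanSpace.single 0 1
  set R := (ℝ ∙ (n - e))ᗮ.reflection
  have hRn : R n = e := Submodule.reflection_sub (by simp [hn, e])
  have hcoord : ∀ x, ⟪x, n⟫ = R x 0 := fun x => by
    rw [← R.inner_map_map, hRn, EuclideanSpace.inner_single_right]; simp
  set box : Set Pt := WithLp.ofLp ⁻¹'
    Set.univ.pi ![Set.Icc (t - s) (t + s), Set.Icc (R c 1 - δ) (R c 1 + δ)]
  have hsub : {x | |⟪x, n⟫ - t| ≤ s} ∩ closedBall c δ ⊆ R ⁻¹' box := by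
    rintro x ⟨hx, hxc⟩
    have h1 : |R x 1 - R c 1| ≤ δ :=
      calc |R x 1 - R c 1| = ‖(R x - R c) 1‖ := by simp
        _ ≤ ‖R x - R c‖ := PiLp.norm_apply_le _ 1
        _ ≤ δ := by rw [← map_sub, R.norm_map, ← dist_eq_norm]; exact hxc
    rw [Set.mem_ofPred_eq, hcoord] at hx
    simp only [box, Set.mem_preimage, Set.mem_univ_pi, Fin.forall_fin_two, Matrix.cons_val_zero,
      Matrix.cons_val_one]
    constructor <;> constructor <;> linarith [abs_le.mp hx, abs_le.mp h1]
  have hbox : MeasurableSet (Set.univ.pi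
      ![Set.Icc (t - s) (t + s), Set.Icc (R c 1 - δ) (R c 1 + δ)]) :=
    MeasurableSet.univ_pi fun i => by fin_cases i <;> exact measurableSet_Icc
  calc volume ({x | |⟪x, n⟫ - t| ≤ s} ∩ closedBall c δ)
      ≤ volume (R ⁻¹' box) := measure_mono hsub
    _ = volume box := R.measurePreserving.measure_preimage
        (hbox.preimage (WithLp.measurable_ofLp 2 _)).nullMeasurableSet
    _ = ENNReal.ofReal (2 * s) * ENNReal.ofReal (2 * δ) := by
        rw [(PiLp.volume_preserving_ofLp (Fin 2)).measure_preimage hbox.nullMeasurableSet,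
          volume_pi_pi, Fin.prod_univ_two]
        simp only [Matrix.cons_val_zero, Matrix.cons_val_one, Real.volume_Icc]
        ring_nf

lemma unifDisk_eq_cond (c : Pt) (δ : ℝ) : unifDisk c δ = volume[|closedBall c δ] := rfl

lemma isProbabilityMeasure_unifDisk (c : Pt) {δ : ℝ} (hδ : 0 < δ) :
    IsProbabilityMeasure (unifDisk c δ) := by
  rw [unifDisk_eq_cond]
  exact cond_isProbabilityMeasure_of_finite (measure_closedBall_pos volume c hδ).ne'
    measure_closedBall_lt_top.ne

lemma unifDisk_distLine_le {δ : ℝ} (hδ : 0 < δ) (c a b : Pt) (s : ℝ) :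
    unifDisk c δ {x | distLine x a b ≤ s} ≤ ENNReal.ofReal (4 * s / (π * δ)) := by
  obtain ⟨n, hn, hab⟩ := exists_norm_eq_one_inner_eq_zero (by simp) (b - a)
  have hstrip : {x | distLine x a b ≤ s} ⊆ {x | |⟪x, n⟫ - ⟪a, n⟫| ≤ s} := by
    intro x hx
    rw [Set.mem_ofPred_eq, ← inner_sub_left]
    exact (abs_inner_sub_le_distLine hn hab).trans hx
  rw [unifDisk_eq_cond, cond_apply measurableSet_closedBall,
    EuclideanSpace.volume_closedBall_fin_two, Set.inter_comm]
  calc (ENNReal.ofReal δ ^ 2 * ENNReal.ofReal π)⁻¹ *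
        volume ({x | distLine x a b ≤ s} ∩ closedBall c δ)
      ≤ (ENNReal.ofReal δ ^ 2 * ENNReal.ofReal π)⁻¹ *
          (ENNReal.ofReal (2 * s) * ENNReal.ofReal (2 * δ)) := by
        gcongr
        exact (measure_mono (Set.inter_subset_inter_left _ hstrip)).trans
          (volume_strip_inter_closedBall_le hn _ s c δ)
    _ = ENNReal.ofReal (4 * s / (π * δ)) := by
        rw [← ENNReal.ofReal_pow hδ.le, ← ENNReal.ofReal_mul (by positivity),
          ← ENNReal.ofReal_inv_of_pos (by positivity), mul_comm (ENNReal.ofReal (2 * s)),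
          ← ENNReal.ofReal_mul (by positivity), ← ENNReal.ofReal_mul (by positivity)]
        congr 1
        field_simp
        ring

lemma measure_pi_le_of_forall_slice_le {n : ℕ} {α : Fin (n + 1) → Type*}
    [∀ i, MeasurableSpace (α i)] (μ : ∀ i, Measure (α i))
    [∀ i, IsProbabilityMeasure (μ i)]
    (i : Fin (n + 1)) {S : Set (α i × ∀ j, α (i.succAbove j))} (hS : MeasurableSet S)
    {A : ℝ≥0∞} (hA : ∀ g, μ i {x | (x, g) ∈ S} ≤ A) :
    Measure.pi μ {f | (f i, fun j => f (i.succAbove j)) ∈ S} ≤ A := by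
  change Measure.pi μ (MeasurableEquiv.piFinSuccAbove α i ⁻¹' S) ≤ A
  rw [(measurePreserving_piFinSuccAbove μ i).measure_preimage hS.nullMeasurableSet,
    Measure.prod_apply_symm hS]
  calc ∫⁻ g, μ i ((fun x => (x, g)) ⁻¹' S) ∂Measure.pi (fun j => μ (i.succAbove j))
      ≤ ∫⁻ _, A ∂Measure.pi (fun j => μ (i.succAbove j)) := lintegral_mono hA
    _ = A := by rw [lintegral_const, measure_univ, mul_one]

lemma setOf_wFlat_subset (w : ℝ) :
    {f : Fin 3 → Pt | WFlat w (f 0) (f 1) (f 2)} ⊆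
      ⋃ i, {f | distLine (f i) (f (i.succAbove 0)) (f (i.succAbove 1)) ≤ √2 * w} := by
  rintro f (h | h | h)
  exacts [Set.mem_iUnion.2 ⟨0, h⟩, Set.mem_iUnion.2 ⟨1, h⟩, Set.mem_iUnion.2 ⟨2, h⟩]

theorem stmt6_general (δ w : ℝ) (hδ : 0 < δ) (c : Fin 3 → Pt) :
    Measure.pi (fun i => unifDisk (c i) δ)
        {f : Fin 3 → Pt | WFlat w (f 0) (f 1) (f 2)} ≤
      ENNReal.ofReal (12 * Real.sqrt 2 * w / (π * δ)) := by
  have := fun i => isProbabilityMeasure_unifDisk (c i) hδ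
  have hS : MeasurableSet {p : Pt × (Fin 2 → Pt) | distLine p.1 (p.2 0) (p.2 1) ≤ √2 * w} :=
    measurableSet_le (measurable_fst.distLine ((measurable_pi_apply 0).comp measurable_snd)
      ((measurable_pi_apply 1).comp measurable_snd)) measurable_const
  have hpoint (i : Fin 3) : Measure.pi (fun i => unifDisk (c i) δ)
      {f | distLine (f i) (f (i.succAbove 0)) (f (i.succAbove 1)) ≤ √2 * w} ≤
        ENNReal.ofReal (4 * (√2 * w) / (π * δ)) :=
    measure_pi_le_of_forall_slice_le (fun i => unifDisk (c i) δ) i hS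
      fun _ => unifDisk_distLine_le hδ (c i) _ _ _
  calc _ ≤ _ := measure_mono (setOf_wFlat_subset w)
    _ ≤ _ := measure_iUnion_fintype_le _ _
    _ ≤ ∑ _ : Fin 3, ENNReal.ofReal (4 * (√2 * w) / (π * δ)) :=
        Finset.sum_le_sum fun i _ => hpoint i
    _ = ENNReal.ofReal (12 * √2 * w / (π * δ)) := by
        rw [Finset.sum_const, Finset.card_univ, Fintype.card_fin, nsmul_eq_mul, Nat.cast_ofNat,
          ← ENNReal.ofReal_ofNat 3, ← ENNReal.ofReal_mul (by norm_num)]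
        congr 1
        ring

theorem stmt6 (δ w : ℝ) (hδ : 0 < δ) (hw : 0 < w) (c : Fin 3 → Pt) :
    Measure.pi (fun i => unifDisk (c i) δ)
        {f : Fin 3 → Pt | WFlat w (f 0) (f 1) (f 2)} ≤
      ENNReal.ofReal (12 * Real.sqrt 2 * w / (π * δ)) :=
  stmt6_general δ w hδ c
end
end
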